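/- arXiv:2111.03508 — 2 statements merged into one kernel-verified Lean document; each statement's English description precedes it below -/
import Mathlib

section
/- Let T be a triangulated category with coproducts, B a compact object of T, and (A_n, f_n : A_n → A_{n+1}) an inductive system in T indexed by natural numbers, with homotopy colimit hocolim A_n defined by the triangle ⊕A_n → ⊕A_n → hocolim A_n (the first map being 1 − shift). Then the canonical map colim_n Hom_T(B, A_n) → Hom_T(B, hocolim A_n) is an isomorphism of abelian groups. -/
open CategoryTheory Limits Pretriangulated ZeroObject

universe w v u

/-- An object `B` is compact if the canonical map `⊕ᵢ Hom(B, Xᵢ) → Hom(B, ∐ᵢ Xᵢ)` is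
bijective for every family `(Xᵢ)`; concretely: every map `B ⟶ ∐ X` is a finite sum of maps
factoring through the inclusions (surjectivity), and such a finite sum vanishes only if all
its components vanish (injectivity). -/
def IsCompactObj {C : Type u} [Category.{v} C] [Preadditive C] (B : C) : Prop :=
  ∀ (ι : Type w) (X : ι → C) [HasCoproduct X],
    (∀ u : B ⟶ ∐ X, ∃ (s : Finset ι) (v : ∀ i, B ⟶ X i),
        u = ∑ i ∈ s, v i ≫ Sigma.ι X i) ∧
    (∀ (s : Finset ι) (v : ∀ i, B ⟶ X i),
        (∑ i ∈ s, v i ≫ Sigma.ι X i) = 0 → ∀ i ∈ s, v i = 0)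

/-- The composite `A n ⟶ A (n + k)` of the transition maps of an inductive system. -/
def chainMap {C : Type u} [Category.{v} C] (A : ℕ → C) (f : ∀ n, A n ⟶ A (n + 1)) :
    ∀ (n k : ℕ), A n ⟶ A (n + k)
  | _, 0 => 𝟙 _
  | n, (k + 1) => chainMap A f n k ≫ f (n + k)

/-! Let `d = telescope A f` be the first map `1 - shift` of the triangle and
`σₘ = collapseTo A f m` the map `∐ Aₙ ⟶ Aₘ` pushing each summand `Aⱼ` with `j ≤ m` forward to
`Aₘ` and killing the others; then `d ≫ σₘ` is the projection onto `Aₘ`. A map from a compact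
object into a coproduct factors through finitely many summands and is determined by its
components, so postcomposition with `d` (and with its shift) is injective on maps out of `B`.
Hence `Hom(B, H) → Hom(B, (∐ Aₙ)[1])` is zero, every `B ⟶ H` lifts to `∐ Aₙ`, and the lift
factors through a finite stage. Conversely, if `v ≫ ιₙ ≫ g = 0` then `v ≫ ιₙ = w ≫ d`, and
composing with `σₘ` identifies the image of `v` in `Aₘ` with the `m`-th component of `w`, which
vanishes for large `m`. -/

lemma chainMap_eq_map {C : Type u} [Category.{v} C] (A : ℕ → C) (f : ∀ n, A n ⟶ A (n + 1))
    (n k : ℕ) :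
    chainMap A f n k = Functor.OfSequence.map f n (n + k) (Nat.le_add_right n k) := by
  induction k with
  | zero => exact (Functor.OfSequence.map_id f n).symm
  | succ k ih =>
    rw [chainMap, ih, ← Functor.OfSequence.map_le_succ f (n + k), ← Functor.OfSequence.map_comp]
    rfl

noncomputable section Telescope

variable {C : Type u} [Category.{v} C] [Preadditive C]
  (A : ℕ → C) (f : ∀ n, A n ⟶ A (n + 1)) [HasCoproduct A]

def telescope : ∐ A ⟶ ∐ A :=
  Sigma.desc fun n => Sigma.ι A n - f n ≫ Sigma.ι A (n + 1)

def collapseTo (m : ℕ) : ∐ A ⟶ A m :=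
  Sigma.desc fun j => if h : j ≤ m then Functor.OfSequence.map f j m h else 0

variable {A f}

lemma ι_telescope (n : ℕ) :
    Sigma.ι A n ≫ telescope A f = Sigma.ι A n - f n ≫ Sigma.ι A (n + 1) :=
  Sigma.ι_desc _ _

lemma ι_collapseTo_of_le {j m : ℕ} (h : j ≤ m) :
    Sigma.ι A j ≫ collapseTo A f m = Functor.OfSequence.map f j m h := by
  simp [collapseTo, h]

lemma ι_collapseTo_of_lt {j m : ℕ} (h : m < j) : Sigma.ι A j ≫ collapseTo A f m = 0 := by
  simp [collapseTo, Nat.not_le.mpr h]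

lemma telescope_collapseTo (m : ℕ) : telescope A f ≫ collapseTo A f m = Sigma.π A m := by
  refine Sigma.hom_ext _ _ fun j => ?_
  rw [← Category.assoc, ι_telescope, Preadditive.sub_comp, Category.assoc, Sigma.ι_π]
  rcases lt_trichotomy j m with hjm | rfl | hmj
  · rw [ι_collapseTo_of_le hjm.le, ι_collapseTo_of_le hjm, dif_neg hjm.ne,
      Functor.OfSequence.map_comp f j (j + 1) m (Nat.le_succ j) hjm,
      Functor.OfSequence.map_le_succ, sub_self]
  · rw [ι_collapseTo_of_le le_rfl, ι_collapseTo_of_lt (Nat.lt_succ_self j), comp_zero,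
      sub_zero, Functor.OfSequence.map_id, dif_pos rfl, eqToHom_refl]
  · rw [ι_collapseTo_of_lt hmj, ι_collapseTo_of_lt (hmj.trans (Nat.lt_succ_self j)),
      comp_zero, sub_zero, dif_neg hmj.ne']

lemma ι_comp_eq_of_telescope_comp_eq_zero {Z : C} {g : ∐ A ⟶ Z}
    (hg : telescope A f ≫ g = 0) {i j : ℕ} (hij : i ≤ j) :
    Sigma.ι A i ≫ g = Functor.OfSequence.map f i j hij ≫ Sigma.ι A j ≫ g := by
  induction j, hij using Nat.le_induction with
  | base => rw [Functor.OfSequence.map_id, Category.id_comp]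
  | succ j hij ih =>
    have hstep : Sigma.ι A j ≫ g = f j ≫ Sigma.ι A (j + 1) ≫ g := by
      have := congrArg (Sigma.ι A j ≫ ·) hg
      rwa [comp_zero, ← Category.assoc, ι_telescope, Preadditive.sub_comp, sub_eq_zero,
        Category.assoc] at this
    rw [ih, hstep, Functor.OfSequence.map_comp f i j (j + 1) hij (Nat.le_succ j),
      Functor.OfSequence.map_le_succ, Category.assoc]

lemma sigmaComparison_map_telescope {D : Type*} [Category D] [Preadditive D] (F : C ⥤ D)
    [F.Additive] [HasCoproduct fun n => F.obj (A n)] :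
    sigmaComparison F A ≫ F.map (telescope A f)
      = telescope (fun n => F.obj (A n)) (fun n => F.map (f n)) ≫ sigmaComparison F A := by
  refine Sigma.hom_ext _ _ fun n => ?_
  rw [ι_comp_sigmaComparison_assoc, ← F.map_comp, ι_telescope, F.map_sub, F.map_comp,
    ← Category.assoc, ι_telescope, Preadditive.sub_comp, Category.assoc, ι_comp_sigmaComparison,
    ι_comp_sigmaComparison]

end Telescope

section Compact

variable {C : Type u} [Category.{v} C] [Preadditive C] {B : C}

lemma IsCompactObj.exists_eq_sum_ι (hB : IsCompactObj.{w} B) (Y : ℕ → C) [HasCoproduct Y]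
    (u : B ⟶ ∐ Y) : ∃ (s : Finset ℕ) (v : ∀ i, B ⟶ Y i), u = ∑ i ∈ s, v i ≫ Sigma.ι Y i := by
  let e : ULift.{w} ℕ ≃ ℕ := Equiv.ulift
  have : HasCoproduct (Y ∘ e) := hasCoproduct_of_equiv_of_iso Y _ e fun _ => Iso.refl _
  obtain ⟨s, v, hv⟩ := (hB _ (Y ∘ e)).1 (u ≫ (Sigma.reindex e Y).inv)
  refine ⟨s.map e.toEmbedding, fun n => v (e.symm n), ?_⟩
  calc u = (u ≫ (Sigma.reindex e Y).inv) ≫ (Sigma.reindex e Y).hom := by simp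
    _ = _ := by
      rw [hv, Preadditive.sum_comp, Finset.sum_map]
      refine Finset.sum_congr rfl fun i _ => ?_
      rw [Category.assoc, Sigma.ι_reindex_hom]
      rfl

lemma IsCompactObj.exists_comp_eq_comp (hB : IsCompactObj.{w} B) (Y : ℕ → C) [HasCoproduct Y]
    (u : B ⟶ ∐ Y) : ∃ N, ∀ {Z : C} (p q : ∐ Y ⟶ Z),
      (∀ i ≤ N, Sigma.ι Y i ≫ p = Sigma.ι Y i ≫ q) → u ≫ p = u ≫ q := by
  obtain ⟨s, v, rfl⟩ := hB.exists_eq_sum_ι Y u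
  refine ⟨s.sup id, fun p q hpq => ?_⟩
  simp only [Preadditive.sum_comp, Category.assoc]
  exact Finset.sum_congr rfl fun i hi => by rw [hpq i (Finset.le_sup (f := id) hi)]

lemma IsCompactObj.eventually_comp_π_eq_zero (hB : IsCompactObj.{w} B) (Y : ℕ → C)
    [HasCoproduct Y] (u : B ⟶ ∐ Y) : ∃ N, ∀ m, N < m → u ≫ Sigma.π Y m = 0 := by
  obtain ⟨N, hN⟩ := hB.exists_comp_eq_comp Y u
  refine ⟨N, fun m hm => ?_⟩
  simpa using hN (Sigma.π Y m) 0 fun i hi => by rw [Sigma.ι_π_of_ne _ (by omega), comp_zero]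

lemma IsCompactObj.eq_zero_of_comp_π_eq_zero (hB : IsCompactObj.{w} B) {Y : ℕ → C}
    [HasCoproduct Y] {u : B ⟶ ∐ Y} (hu : ∀ m, u ≫ Sigma.π Y m = 0) : u = 0 := by
  obtain ⟨N, hN⟩ := hB.exists_comp_eq_comp Y u
  have hid := hN (𝟙 _) (∑ j ∈ Finset.range (N + 1), Sigma.π Y j ≫ Sigma.ι Y j) fun i hi => by
    rw [Category.comp_id, Preadditive.comp_sum, Finset.sum_eq_single i
      (fun j _ hj => by rw [Sigma.ι_π_of_ne_assoc _ hj.symm, zero_comp])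
      (fun h => absurd (Finset.mem_range.2 (by omega)) h), Sigma.ι_π_eq_id_assoc]
  simpa [Preadditive.comp_sum, reassoc_of% hu] using hid

lemma IsCompactObj.eq_zero_of_comp_telescope_eq_zero (hB : IsCompactObj.{w} B) {Y : ℕ → C}
    {φ : ∀ n, Y n ⟶ Y (n + 1)} [HasCoproduct Y] {x : B ⟶ ∐ Y}
    (hx : x ≫ telescope Y φ = 0) : x = 0 :=
  hB.eq_zero_of_comp_π_eq_zero fun m => by
    rw [← telescope_collapseTo (f := φ), reassoc_of% hx, zero_comp]

lemma IsCompactObj.eq_zero_of_comp_map_telescope_eq_zero (hB : IsCompactObj.{w} B)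
    {D : Type*} [Category D] [Preadditive D] (F : D ⥤ C) [F.Additive]
    {A : ℕ → D} {f : ∀ n, A n ⟶ A (n + 1)} [HasCoproduct A] [HasCoproduct fun n => F.obj (A n)]
    [IsIso (sigmaComparison F A)] {x : B ⟶ F.obj (∐ A)} (hx : x ≫ F.map (telescope A f) = 0) :
    x = 0 := by
  have hx' : (x ≫ inv (sigmaComparison F A)) ≫ telescope _ (fun n => F.map (f n)) = 0 := by
    rw [← cancel_mono (sigmaComparison F A), Category.assoc, ← sigmaComparison_map_telescope,
      Category.assoc, IsIso.inv_hom_id_assoc, hx, zero_comp]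
  simpa using hB.eq_zero_of_comp_telescope_eq_zero hx'

end Compact

/-- Let `T` be a triangulated category with coproducts, `B` a compact object,
and `(Aₙ, fₙ : Aₙ → Aₙ₊₁)` an inductive system with homotopy colimit `H` defined by a
distinguished triangle `⊕Aₙ → ⊕Aₙ → H → (⊕Aₙ)[1]`, the first map being `1 − shift`.
Then the canonical map `colimₙ Hom_T(B, Aₙ) → Hom_T(B, H)` is an isomorphism of abelian
groups; concretely, it is surjective (every `B ⟶ H` factors through some `λₙ : Aₙ ⟶ H`)
and injective (a map `B ⟶ Aₙ` killed by `λₙ` dies at some finite stage of the colimit). -/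
theorem compact_hom_hocolim_iso
    (C : Type u) [Category.{v} C] [Preadditive C] [HasZeroObject C] [HasShift C ℤ]
    [∀ n : ℤ, (shiftFunctor C n).Additive] [Pretriangulated C]
    [HasCoproducts.{w} C] [HasCoproducts.{0} C]
    (B : C) (hB : IsCompactObj.{w} B)
    (A : ℕ → C) (f : ∀ n, A n ⟶ A (n + 1))
    -- the homotopy colimit `H`, given by a distinguished triangle on `1 - shift`
    (H : C) (g : (∐ A) ⟶ H) (h : H ⟶ (∐ A)⟦(1 : ℤ)⟧)
    (hH : Triangle.mk (Sigma.desc fun n => Sigma.ι A n - f n ≫ Sigma.ι A (n + 1)) g h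
      ∈ distTriang C) :
    -- surjectivity of `colimₙ Hom(B, Aₙ) → Hom(B, H)`
    (∀ u : B ⟶ H, ∃ (n : ℕ) (v : B ⟶ A n), v ≫ Sigma.ι A n ≫ g = u)
    -- injectivity of `colimₙ Hom(B, Aₙ) → Hom(B, H)`
    ∧ (∀ (n : ℕ) (v : B ⟶ A n), v ≫ Sigma.ι A n ≫ g = 0 →
        ∃ k : ℕ, v ≫ chainMap A f n k = 0) := by
  have hg : telescope A f ≫ g = 0 := comp_distTriang_mor_zero₁₂ _ hH
  refine ⟨fun u => ?_, fun n v hv => ?_⟩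
  · have hh : h ≫ (telescope A f)⟦(1 : ℤ)⟧' = 0 := comp_distTriang_mor_zero₃₁ _ hH
    have hu : u ≫ h = 0 := hB.eq_zero_of_comp_map_telescope_eq_zero (shiftFunctor C (1 : ℤ))
      (by rw [Category.assoc, hh, comp_zero])
    obtain ⟨w, rfl⟩ : ∃ w : B ⟶ ∐ A, u = w ≫ g := Triangle.coyoneda_exact₃ _ hH u hu
    obtain ⟨N, hN⟩ := hB.exists_comp_eq_comp A w
    refine ⟨N, w ≫ collapseTo A f N, ?_⟩
    rw [Category.assoc]
    refine (hN _ _ fun i hi => ?_).symm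
    rw [← Category.assoc, ι_collapseTo_of_le hi, ← ι_comp_eq_of_telescope_comp_eq_zero hg]
  · obtain ⟨w, hw⟩ : ∃ w, v ≫ Sigma.ι A n = w ≫ telescope A f :=
      Triangle.coyoneda_exact₂ _ hH (v ≫ Sigma.ι A n) ((Category.assoc _ _ _).trans hv)
    obtain ⟨N, hN⟩ := hB.eventually_comp_π_eq_zero A w
    refine ⟨N + 1, ?_⟩
    rw [chainMap_eq_map, ← ι_collapseTo_of_le, ← Category.assoc, hw, Category.assoc,
      telescope_collapseTo, hN _ (by omega)]
end

section
/- Abstract version of the convergence argument: Let T be a compactly generated triangulated category with a set of compact generators G, and (S_n)_{n∈ℤ} with S_{n+1} ⊆ S_n ⊆ G determining localizing subcategories Loc(S_n) whose orthogonal inclusions have right adjoints, giving functors bc_{≤n}. Suppose for every generator g ∈ G there exists N(g) ∈ ℤ such that g ∈ Loc(S_{N(g)+1})^⊥. Then for every A ∈ T the canonical map c : hocolim_{n→∞} bc_{≤n}(A) → A is an isomorphism. -/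
open CategoryTheory Limits Pretriangulated ZeroObject

universe w v u

variable {C : Type u} [Category.{v} C]

/-- The functor `bc_{≤n} = j_{n+1} ∘ p_{n+1}` of the orthogonal tower, on objects. -/
def bcObj (orth : ℤ → C → Prop) (p : ∀ n : ℤ, C ⥤ ObjectProperty.FullSubcategory (orth n))
    (n : ℤ) (A : C) : C :=
  (ObjectProperty.ι (orth (n + 1))).obj ((p (n + 1)).obj A)

/-- The `ℕ`-indexed tower `k ↦ bc_{≤ r+k} A`. -/
def towerObj (orth : ℤ → C → Prop) (p : ∀ n : ℤ, C ⥤ ObjectProperty.FullSubcategory (orth n))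
    (r : ℤ) (A : C) (k : ℕ) : C :=
  bcObj orth p (r + k) A

/-- The transition maps of the `ℕ`-indexed tower `k ↦ bc_{≤ r+k} A`. -/
def towerMap (orth : ℤ → C → Prop) (p : ∀ n : ℤ, C ⥤ ObjectProperty.FullSubcategory (orth n))
    (r : ℤ) (A : C)
    (t : ∀ n : ℤ, bcObj orth p n A ⟶ bcObj orth p (n + 1) A) (k : ℕ) :
    towerObj orth p r A k ⟶ towerObj orth p r A (k + 1) :=
  t (r + k) ≫ eqToHom (congrArg (fun m : ℤ => bcObj orth p m A) (by push_cast; ring))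

/-!
A map from a compact object `B` into the homotopy colimit `H` of a tower lifts to `∐ₖ Xₖ`,
since by compactness `1 - f` is injective on maps from `B⟦-1⟧` into `∐ₖ Xₖ`; compactness
again makes the lift a finite sum, and the relations `ιₖ ≫ g = fₖ ≫ ιₖ₊₁ ≫ g` push it into a single stage `Xₙ`, for any large `n`.
A shifted generator `B` lies in `Loc(Sₙ₊₁)^⊥` for all large `n`, and there the counit
`bc_{≤n} A ⟶ A` is bijective on `Hom(B, -)`; hence so is `c`. The cone of `c` then receives
no nonzero map from a shifted generator, so it vanishes.
-/

lemma CategoryTheory.Adjunction.comp_counit_app_bijective {D : Type*} [Category D]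
    {F : D ⥤ C} {G : C ⥤ D} (adj : F ⊣ G) (hF : F.FullyFaithful) (B : D) (A : C) :
    Function.Bijective fun φ : F.obj B ⟶ F.obj (G.obj A) => φ ≫ adj.counit.app A := by
  have : (fun φ : F.obj B ⟶ F.obj (G.obj A) => φ ≫ adj.counit.app A) =
      (adj.homEquiv B A).symm ∘ hF.homEquiv.symm := by
    funext φ
    simp [Adjunction.homEquiv_counit]
  rw [this]
  exact (adj.homEquiv B A).symm.bijective.comp hF.homEquiv.symm.bijective

section Preadditive

variable [Preadditive C]

lemma IsCompactObj.obj_of_adjunction {D : Type*} [Category D] [Preadditive D]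
    [HasCoproducts.{0} C] {F : C ⥤ D} {G : D ⥤ C} (adj : F ⊣ G) [F.Additive]
    [PreservesColimitsOfSize.{0, 0} G] {B : C} (hB : IsCompactObj.{0} B) :
    IsCompactObj.{0} (F.obj B) := by
  intro ι X _
  let φ := adj.homAddEquiv B (∐ X)
  let cmp := sigmaComparison G X
  have hφsum : ∀ (s : Finset ι) (v : ∀ k, F.obj B ⟶ X k),
      φ (∑ k ∈ s, v k ≫ Sigma.ι X k) =
        (∑ k ∈ s, adj.homEquiv B (X k) (v k) ≫ Sigma.ι (fun k => G.obj (X k)) k) ≫ cmp := by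
    intro s v
    simp only [φ, cmp, map_sum, Preadditive.sum_comp, Adjunction.homAddEquiv_apply,
      Adjunction.homEquiv_naturality_right, Category.assoc, ι_comp_sigmaComparison]
  obtain ⟨hdec, hinj⟩ := hB ι fun k => G.obj (X k)
  refine ⟨fun u => ?_, fun s v hv k hk => ?_⟩
  · obtain ⟨s, w, hw⟩ := hdec (φ u ≫ inv cmp)
    refine ⟨s, fun k => (adj.homEquiv B (X k)).symm (w k), φ.injective ?_⟩
    simp only [hφsum, Equiv.apply_symm_apply, ← hw, Category.assoc, IsIso.inv_hom_id,
      Category.comp_id]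
  · have := hinj s (fun k => adj.homEquiv B (X k) (v k))
      ((Preadditive.IsIso.comp_right_eq_zero _ cmp).1 (by rw [← hφsum, hv, map_zero]))
    exact (adj.homAddEquiv B (X k)).map_eq_zero_iff.1 (this k hk)

lemma IsCompactObj.exists_sum_range {B : C} {X : ℕ → C} [HasCoproduct X]
    (hB : IsCompactObj.{0} B) (u : B ⟶ ∐ X) :
    ∃ (m : ℕ) (V : ∀ k, B ⟶ X k),
      (∀ k, m ≤ k → V k = 0) ∧ u = ∑ k ∈ Finset.range m, V k ≫ Sigma.ι X k := by
  classical
  obtain ⟨s, v, rfl⟩ := (hB ℕ X).1 u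
  obtain ⟨m, hsm⟩ := Finset.exists_nat_subset_range s
  refine ⟨m, fun k => if k ∈ s then v k else 0,
    fun k hk => if_neg fun hks => by simpa using (Finset.mem_range.1 (hsm hks)).trans_le hk, ?_⟩
  rw [← Finset.sum_subset hsm fun k _ hk => by simp [hk]]
  exact Finset.sum_congr rfl fun k hk => by simp [hk]

section Telescope

variable {X : ℕ → C} (f : ∀ k, X k ⟶ X (k + 1))

noncomputable def telescopeMap [HasCoproduct X] : ∐ X ⟶ ∐ X :=
  Sigma.desc fun k => Sigma.ι X k - f k ≫ Sigma.ι X (k + 1)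

def telescopeShiftCoeff {B : C} (V : ∀ k, B ⟶ X k) : ∀ k, B ⟶ X k
  | 0 => 0
  | k + 1 => V k ≫ f k

def towerPush {B : C} (V : ∀ k, B ⟶ X k) : ∀ m, B ⟶ X m
  | 0 => 0
  | m + 1 => (towerPush V m + V m) ≫ f m

variable [HasCoproduct X]

lemma sum_comp_telescopeMap {B : C} (V : ∀ k, B ⟶ X k) (m : ℕ) (hV : V m = 0) :
    (∑ k ∈ Finset.range m, V k ≫ Sigma.ι X k) ≫ telescopeMap f =
      ∑ k ∈ Finset.range (m + 1), (V k - telescopeShiftCoeff f V k) ≫ Sigma.ι X k := by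
  simp only [Preadditive.sum_comp, Category.assoc, telescopeMap, Sigma.ι_desc,
    Preadditive.comp_sub, Preadditive.sub_comp, Finset.sum_sub_distrib]
  rw [Finset.sum_range_succ _ m, Finset.sum_range_succ' (fun k => _ ≫ Sigma.ι X k)]
  simp [telescopeShiftCoeff, hV]

lemma IsCompactObj.eq_zero_of_comp_telescopeMap {B : C} (hB : IsCompactObj.{0} B)
    (u : B ⟶ ∐ X) (hu : u ≫ telescopeMap f = 0) : u = 0 := by
  obtain ⟨m, V, hVm, rfl⟩ := hB.exists_sum_range u
  rw [sum_comp_telescopeMap f V m (hVm m le_rfl)] at hu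
  have hcoeff := (hB ℕ X).2 _ _ hu
  have hV : ∀ k, V k = 0 := by
    intro k
    induction k with
    | zero => simpa [telescopeShiftCoeff, sub_eq_zero] using hcoeff 0 (by simp)
    | succ k ih =>
      by_cases hk : k + 1 < m + 1
      · simpa [telescopeShiftCoeff, sub_eq_zero, ih] using hcoeff (k + 1) (by simpa using hk)
      · exact hVm _ (by omega)
  simp [hV]

lemma sum_comp_eq_towerPush {B Z : C} (g : ∐ X ⟶ Z)
    (hg : ∀ k, Sigma.ι X k ≫ g = f k ≫ Sigma.ι X (k + 1) ≫ g) (V : ∀ k, B ⟶ X k) (m : ℕ) :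
    (∑ k ∈ Finset.range m, V k ≫ Sigma.ι X k) ≫ g =
      towerPush f V m ≫ Sigma.ι X m ≫ g := by
  induction m with
  | zero => simp [towerPush]
  | succ m ih =>
    rw [Finset.sum_range_succ, Preadditive.add_comp, ih, Category.assoc, hg]
    simp only [towerPush, Preadditive.add_comp, Category.assoc]

end Telescope

section Shift

variable [HasShift C ℤ]

def rightOrthShifts (S : Set C) (E : C) : Prop :=
  ∀ K ∈ S, ∀ i : ℤ, ∀ f : K⟦i⟧ ⟶ E, f = 0

lemma rightOrthShifts_of_subset {S S' : Set C} (hSS' : S ⊆ S') {E : C}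
    (hE : rightOrthShifts S' E) : rightOrthShifts S E :=
  fun K hK => hE K (hSS' hK)

variable [∀ n : ℤ, (shiftFunctor C n).Additive]

lemma IsCompactObj.shift [HasCoproducts.{0} C] {B : C} (hB : IsCompactObj.{0} B) (i : ℤ) :
    IsCompactObj.{0} (B⟦i⟧) :=
  hB.obj_of_adjunction (F := shiftFunctor C i) (G := shiftFunctor C (-i))
    (shiftEquiv C i).toAdjunction

lemma eq_zero_of_comp_shift_map_eq_zero {B Y Y' : C} {q : Y ⟶ Y'} (n : ℤ)
    (hq : ∀ ψ : B⟦-n⟧ ⟶ Y, ψ ≫ q = 0 → ψ = 0) (φ : B ⟶ Y⟦n⟧) (hφ : φ ≫ q⟦n⟧' = 0) :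
    φ = 0 := by
  let adj : shiftFunctor C (-n) ⊣ shiftFunctor C n := (shiftEquiv C n).symm.toAdjunction
  obtain ⟨ψ, rfl⟩ := (adj.homEquiv _ _).surjective φ
  rw [← adj.homEquiv_naturality_right, ← adj.homAddEquiv_zero] at hφ
  rw [hq ψ ((adj.homEquiv _ _).injective hφ), adj.homAddEquiv_zero]

lemma rightOrthShifts.shift {S : Set C} {E : C} (hE : rightOrthShifts S E) (i : ℤ) :
    rightOrthShifts S (E⟦i⟧) := by
  intro K hK j f
  let adj : shiftFunctor C (-i) ⊣ shiftFunctor C i := (shiftEquiv C i).symm.toAdjunction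
  obtain ⟨ψ, rfl⟩ := (adj.homEquiv _ _).surjective f
  have hψ : ψ = 0 := (Preadditive.IsIso.comp_left_eq_zero _ _).1
    (hE K hK (j + -i) ((shiftFunctorAdd C j (-i)).hom.app K ≫ ψ))
  rw [hψ, adj.homAddEquiv_zero]

end Shift

end Preadditive

section Pretriangulated

variable [Preadditive C] [HasZeroObject C] [HasShift C ℤ]
  [∀ n : ℤ, (shiftFunctor C n).Additive] [Pretriangulated C]

lemma isIso_of_bijective_comp (P : C → Prop) (hP : ∀ B, P B → P (B⟦(-1 : ℤ)⟧))
    (hdet : ∀ W : C, (∀ B, P B → ∀ f : B ⟶ W, f = 0) → IsZero W) {H A : C} (c : H ⟶ A)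
    (hc : ∀ B, P B → Function.Bijective fun x : B ⟶ H => x ≫ c) : IsIso c := by
  obtain ⟨W, w, e, hW⟩ := distinguished_cocone_triangle c
  refine (Triangle.isZero₃_iff_isIso₁ _ hW).1 (hdet W fun B hB f => ?_)
  have hfe : f ≫ e = 0 :=
    eq_zero_of_comp_shift_map_eq_zero 1
      (fun ψ hψ => (hc _ (hP B hB)).1 (hψ.trans zero_comp.symm)) (f ≫ e)
      (by rw [Category.assoc, show e ≫ c⟦(1 : ℤ)⟧' = 0 from comp_distTriang_mor_zero₃₁ _ hW,
        comp_zero])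
  obtain ⟨y, rfl⟩ := Triangle.coyoneda_exact₃ _ hW f hfe
  obtain ⟨x, rfl⟩ := (hc B hB).2 y
  change (x ≫ c) ≫ w = 0
  rw [Category.assoc, show c ≫ w = 0 from comp_distTriang_mor_zero₁₂ _ hW, comp_zero]

section Hocolim

variable [HasCoproducts.{0} C] {X : ℕ → C} (f : ∀ k, X k ⟶ X (k + 1)) {H : C}
  {g : ∐ X ⟶ H} {h : H ⟶ (∐ X)⟦(1 : ℤ)⟧}

lemma ι_comp_hocolim (hH : Triangle.mk (telescopeMap f) g h ∈ distTriang C) (k : ℕ) :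
    Sigma.ι X k ≫ g = f k ≫ Sigma.ι X (k + 1) ≫ g := by
  have h0 : telescopeMap f ≫ g = 0 := comp_distTriang_mor_zero₁₂ _ hH
  have := Sigma.ι X k ≫= h0
  rw [telescopeMap, Sigma.ι_desc_assoc, Preadditive.sub_comp, comp_zero, sub_eq_zero] at this
  simpa only [Category.assoc] using this

lemma IsCompactObj.exists_eq_comp_ι_comp_hocolim
    (hH : Triangle.mk (telescopeMap f) g h ∈ distTriang C) {B : C} (hB : IsCompactObj.{0} B)
    (x : B ⟶ H) : ∃ m, ∀ n, m ≤ n → ∃ y : B ⟶ X n, x = y ≫ Sigma.ι X n ≫ g := by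
  have hxh : x ≫ h = 0 :=
    eq_zero_of_comp_shift_map_eq_zero 1 ((hB.shift _).eq_zero_of_comp_telescopeMap f) (x ≫ h)
      (by rw [Category.assoc, show h ≫ (telescopeMap f)⟦(1 : ℤ)⟧' = 0 from
        comp_distTriang_mor_zero₃₁ _ hH, comp_zero])
  obtain ⟨u, rfl⟩ := Triangle.coyoneda_exact₃ _ hH x hxh
  obtain ⟨m, V, hVm, rfl⟩ := hB.exists_sum_range u
  refine ⟨m, fun n hmn => ⟨towerPush f V n, ?_⟩⟩
  rw [← sum_comp_eq_towerPush f g (ι_comp_hocolim f hH),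
    Finset.sum_subset (Finset.range_subset_range.2 hmn) fun k _ hk => by
      rw [hVm k (by simpa using hk), zero_comp]]
  rfl

lemma bijective_comp_hocolim_of_eventually_bijective
    (hH : Triangle.mk (telescopeMap f) g h ∈ distTriang C) {A : C} (c : H ⟶ A)
    (ε : ∀ k, X k ⟶ A) (hc : ∀ k, Sigma.ι X k ≫ g ≫ c = ε k) {B : C}
    (hB : IsCompactObj.{0} B) (k₀ : ℕ)
    (hε : ∀ k, k₀ ≤ k → Function.Bijective fun y : B ⟶ X k => y ≫ ε k) :
    Function.Bijective fun x : B ⟶ H => x ≫ c := by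
  refine ⟨fun x₁ x₂ hx => ?_, fun a => ?_⟩
  · obtain ⟨m₁, hm₁⟩ := hB.exists_eq_comp_ι_comp_hocolim f hH x₁
    obtain ⟨m₂, hm₂⟩ := hB.exists_eq_comp_ι_comp_hocolim f hH x₂
    let n := max k₀ (max m₁ m₂)
    obtain ⟨y₁, rfl⟩ := hm₁ n (by omega)
    obtain ⟨y₂, rfl⟩ := hm₂ n (by omega)
    have hy : y₁ = y₂ := (hε n (by omega)).1 (by simpa [hc] using hx)
    rw [hy]
  · obtain ⟨y, rfl⟩ := (hε k₀ le_rfl).2 a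
    exact ⟨y ≫ Sigma.ι X k₀ ≫ g, by simp [hc]⟩

end Hocolim

end Pretriangulated

/-- abstract version of the convergence argument: Let `T` be a compactly
generated triangulated category with a set `G` of compact generators, and `(Sₙ)_{n∈ℤ}`
with `Sₙ₊₁ ⊆ Sₙ ⊆ G` determining localizing subcategories `Loc(Sₙ)` whose orthogonal
inclusions have right adjoints, giving functors `bc_{≤n}`.  (The right orthogonal of
`Loc(Sₙ)` is characterized on the generators: `E ∈ Loc(Sₙ)^⊥` iff all maps `K⟦i⟧ ⟶ E`
with `K ∈ Sₙ` vanish.)  Suppose that for every generator `g ∈ G` there is `N(g) ∈ ℤ`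
with `g ∈ Loc(S_{N(g)+1})^⊥`.  Then for every `A ∈ T` the canonical map
`c : hocolim_{n→∞} bc_{≤n}(A) → A` is an isomorphism. -/
theorem hocolim_bc_isIso_abstract
    [Preadditive C] [HasZeroObject C] [HasShift C ℤ]
    [∀ n : ℤ, (shiftFunctor C n).Additive] [Pretriangulated C] [HasCoproducts.{0} C]
    (G : Set C)
    -- the generators are compact ...
    (hcpt : ∀ gK ∈ G, IsCompactObj.{0} gK)
    -- ... and jointly detect zero objects
    (hgen : ∀ W : C, (∀ K ∈ G, ∀ i : ℤ, ∀ f : K⟦i⟧ ⟶ W, f = 0) → IsZero W)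
    (S : ℤ → Set C)
    (hSG : ∀ n : ℤ, S n ⊆ G)
    (hS : ∀ n : ℤ, S (n + 1) ⊆ S n)
    -- `orth n` is the right orthogonal `Loc(Sₙ)^⊥`, characterized on the generators
    (orth : ℤ → C → Prop)
    (horth : ∀ n : ℤ, orth n = fun E => ∀ K ∈ S n, ∀ i : ℤ, ∀ f : K⟦i⟧ ⟶ E, f = 0)
    -- the right adjoints of the inclusions `Loc(Sₙ)^⊥ → T`
    (p : ∀ n : ℤ, C ⥤ ObjectProperty.FullSubcategory (orth n))
    (adj : ∀ n : ℤ, ObjectProperty.ι (orth n) ⊣ p n)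
    -- every generator is orthogonal at some finite level
    (hN : ∀ gK ∈ G, ∃ N : ℤ, orth (N + 1) gK)
    (A : C) (r : ℤ)
    -- the maps `bc_{≤n} A ⟶ bc_{≤n+1} A` of the orthogonal tower, compatible with counits
    (t : ∀ n : ℤ, bcObj orth p n A ⟶ bcObj orth p (n + 1) A)
    (ht : ∀ n : ℤ, t n ≫ (adj (n + 1 + 1)).counit.app A = (adj (n + 1)).counit.app A)
    -- the homotopy colimit of the tower, via the distinguished triangle on `1 - shift`
    (H : C) (g : (∐ towerObj orth p r A) ⟶ H) (h : H ⟶ (∐ towerObj orth p r A)⟦(1 : ℤ)⟧)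
    (hH : Triangle.mk (Sigma.desc fun k => Sigma.ι (towerObj orth p r A) k -
        towerMap orth p r A t k ≫ Sigma.ι (towerObj orth p r A) (k + 1)) g h
      ∈ distTriang C)
    -- the canonical map `c : hocolim bc_{≤n} A ⟶ A` induced by the counits
    (c : H ⟶ A)
    (hc : ∀ k : ℕ, Sigma.ι (towerObj orth p r A) k ≫ g ≫ c =
      (adj (r + k + 1)).counit.app A) :
    IsIso c := by
  have horthMono : ∀ {n n' : ℤ} {E : C}, n ≤ n' → orth n E → orth n' E := fun hnn' hE => by
    rw [horth] at hE ⊢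
    exact rightOrthShifts_of_subset (antitone_int_of_succ_le hS hnn') hE
  have horthShift : ∀ {n : ℤ} {E : C} (i : ℤ), orth n E → orth n (E⟦i⟧) := fun i hE => by
    rw [horth] at hE ⊢
    exact rightOrthShifts.shift hE i
  let P : C → Prop := fun B => IsCompactObj.{0} B ∧ ∃ N, orth N B
  have hPshift : ∀ B, P B → ∀ i : ℤ, P (B⟦i⟧) :=
    fun _ ⟨hB, N, hBN⟩ i => ⟨hB.shift i, N, horthShift i hBN⟩
  have hPgen : ∀ K ∈ G, ∀ i : ℤ, P (K⟦i⟧) := fun K hK i =>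
    hPshift K ⟨hcpt K hK, (hN K hK).elim fun N hKN => ⟨N + 1, hKN⟩⟩ i
  refine isIso_of_bijective_comp P (fun B hB => hPshift B hB _)
    (fun W hW => hgen W fun K hK i => hW _ (hPgen K hK i)) c ?_
  rintro B ⟨hB, N, hBN⟩
  exact bijective_comp_hocolim_of_eventually_bijective (towerMap orth p r A t) hH c
    (fun k => (adj (r + k + 1)).counit.app A) hc hB (N - r).toNat fun k hk =>
      (adj (r + k + 1)).comp_counit_app_bijective (ObjectProperty.fullyFaithfulι _)
        ⟨B, horthMono (by omega) hBN⟩ A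
end
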